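/- Let μ ∈ M(X_1,T_1) and let α_i be finite Borel partitions of X_i, i=1,…,k. Then Σ_{i=1}^k a_i h_μ(T_1, ⋁_{j=i}^k τ_{j−1}^{−1}α_j) ≤ liminf_{N→∞} (1/N) H_μ( ⋁_{i=1}^k (τ_{i−1}^{−1}α_i)_0^{⌈(a_1+…+a_i)N⌉−1} ). -/

import Mathlib

open MeasureTheory Set Filter Topology
open scoped ENNReal symmDiff

namespace WTP

variable {k : ℕ}

/-- cumulative weight `a 1 + … + a i` (zero-indexed: `a 0 + … + a i`). -/
noncomputable def cw (a : Fin k → ℝ) (i : Fin k) : ℝ := ∑ j ∈ Finset.Iic i, a j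

/-- Birkhoff sum `S_n f = ∑_{l<n} f ∘ T^l`. -/
noncomputable def birk {X : Type*} (T : X → X) (f : X → ℝ) (n : ℕ) (x : X) : ℝ :=
  ∑ l ∈ Finset.range n, f (T^[l] x)

/-- a (finite) open cover of a topological space. -/
def IsOpenCover {X : Type*} [TopologicalSpace X] (𝒰 : Set (Set X)) : Prop :=
  𝒰.Finite ∧ (∀ U ∈ 𝒰, IsOpen U) ∧ ⋃₀ 𝒰 = Set.univ

/-- pullback of a cover along a map. -/
def pullCov {X Y : Type*} (g : X → Y) (𝒰 : Set (Set Y)) : Set (Set X) :=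
  (fun U => g ⁻¹' U) '' 𝒰

/-- the quantity `exp(−s·n + (1/a₁)·sup_{x∈A} S_{⌈a₁ n⌉} f(x))`, as an element of `ℝ≥0∞`. -/
noncomputable def pterm {X : Type*} (T1 : X → X) (f : X → ℝ) (a1 s : ℝ) (n : ℕ)
    (A : Set X) : ℝ≥0∞ :=
  ENNReal.ofReal (Real.exp (-(s * n) + (1 / a1) * sSup (birk T1 f ⌈a1 * (n : ℝ)⌉₊ '' A)))

/-- the weighted Bowen ball `B_n^𝐚(x, ε)`. -/
def wBowen {X : Fin k → Type*} [∀ i, MetricSpace (X i)] {X1 : Type*}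
    (T : ∀ i, X i → X i) (τ : ∀ i, X1 → X i) (a : Fin k → ℝ)
    (n : ℕ) (x : X1) (ε : ℝ) : Set X1 :=
  {y | ∀ i : Fin k, ∀ j < ⌈cw a i * (n : ℝ)⌉₊,
      dist ((T i)^[j] (τ i x)) ((T i)^[j] (τ i y)) < ε}

section Bowen

variable [NeZero k] {X : Fin k → Type*} [∀ i, MetricSpace (X i)] {X1 : Type*}
  [MeasurableSpace X1]

/-- `Λ^{𝐚,s}_{N,ε}(Z,f)`. -/
noncomputable def lamBowenN (T1 : X1 → X1) (T : ∀ i, X i → X i) (τ : ∀ i, X1 → X i)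
    (a : Fin k → ℝ) (f : X1 → ℝ) (s ε : ℝ) (N : ℕ) (Z : Set X1) : ℝ≥0∞ :=
  ⨅ (D : Set (ℕ × Set X1)) (_ : D.Countable)
    (_ : ∀ p ∈ D, N ≤ p.1 ∧ MeasurableSet p.2 ∧ ∃ x : X1, p.2 ⊆ wBowen T τ a p.1 x ε)
    (_ : Z ⊆ ⋃ p ∈ D, p.2),
    ∑' p : D, pterm T1 f (a 0) s p.1.1 p.1.2

/-- `Λ^{𝐚,s}_{ε}(Z,f) = lim_{N→∞} Λ^{𝐚,s}_{N,ε}(Z,f)` (an increasing limit). -/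
noncomputable def lamBowen (T1 : X1 → X1) (T : ∀ i, X i → X i) (τ : ∀ i, X1 → X i)
    (a : Fin k → ℝ) (f : X1 → ℝ) (s ε : ℝ) (Z : Set X1) : ℝ≥0∞ :=
  ⨆ N : ℕ, lamBowenN T1 T τ a f s ε N Z

/-- `P^𝐚(T₁, Z, ε, f) = inf {s : Λ^{𝐚,s}_ε(Z,f) = 0}`. -/
noncomputable def PBowenEps (T1 : X1 → X1) (T : ∀ i, X i → X i) (τ : ∀ i, X1 → X i)
    (a : Fin k → ℝ) (Z : Set X1) (f : X1 → ℝ) (ε : ℝ) : EReal :=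
  sInf (Real.toEReal '' {s : ℝ | lamBowen T1 T τ a f s ε Z = 0})

/-- the 𝐚-weighted topological pressure `P^𝐚(T₁, Z, f) = lim_{ε→0} P^𝐚(T₁, Z, ε, f)`
(an increasing limit as `ε` decreases to `0`). -/
noncomputable def PBowen (T1 : X1 → X1) (T : ∀ i, X i → X i) (τ : ∀ i, X1 → X i)
    (a : Fin k → ℝ) (Z : Set X1) (f : X1 → ℝ) : EReal :=
  ⨆ ε : {e : ℝ // 0 < e}, PBowenEps T1 T τ a Z f ε.1

/-- `W^{𝐚,s}_{N,ε}(Z,f)`. -/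
noncomputable def wBowenWN (T1 : X1 → X1) (T : ∀ i, X i → X i) (τ : ∀ i, X1 → X i)
    (a : Fin k → ℝ) (f : X1 → ℝ) (s ε : ℝ) (N : ℕ) (Z : Set X1) : ℝ≥0∞ :=
  ⨅ (D : Set (ℕ × Set X1 × ℝ≥0∞)) (_ : D.Countable)
    (_ : ∀ p ∈ D, N ≤ p.1 ∧ MeasurableSet p.2.1 ∧ 0 < p.2.2 ∧ p.2.2 ≠ ⊤ ∧
        ∃ x : X1, p.2.1 ⊆ wBowen T τ a p.1 x ε)
    (_ : ∀ z ∈ Z, 1 ≤ ∑' p : D, (p.1.2.1).indicator (fun _ => p.1.2.2) z),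
    ∑' p : D, p.1.2.2 * pterm T1 f (a 0) s p.1.1 p.1.2.1

/-- `W^{𝐚,s}_{ε}(Z,f)`. -/
noncomputable def wBowenW (T1 : X1 → X1) (T : ∀ i, X i → X i) (τ : ∀ i, X1 → X i)
    (a : Fin k → ℝ) (f : X1 → ℝ) (s ε : ℝ) (Z : Set X1) : ℝ≥0∞ :=
  ⨆ N : ℕ, wBowenWN T1 T τ a f s ε N Z

/-- `P_W^𝐚(T₁, Z, ε, f)`. -/
noncomputable def PWBowenEps (T1 : X1 → X1) (T : ∀ i, X i → X i) (τ : ∀ i, X1 → X i)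
    (a : Fin k → ℝ) (Z : Set X1) (f : X1 → ℝ) (ε : ℝ) : EReal :=
  sInf (Real.toEReal '' {s : ℝ | wBowenW T1 T τ a f s ε Z = 0})

/-- the average 𝐚-weighted topological pressure `P_W^𝐚(T₁, Z, f)`. -/
noncomputable def PWBowen (T1 : X1 → X1) (T : ∀ i, X i → X i) (τ : ∀ i, X1 → X i)
    (a : Fin k → ℝ) (Z : Set X1) (f : X1 → ℝ) : EReal :=
  ⨆ ε : {e : ℝ // 0 < e}, PWBowenEps T1 T τ a Z f ε.1

end Bowen

section Local

variable [NeZero k] {X1 : Type*} [MeasurableSpace X1]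

/-- the cover `⋁_{i=1}^k (τ_{i-1}^{-1} 𝒰_i)_0^{⌈(a_1+…+a_i) n⌉ - 1}` on the first space, where
`𝒱 i` is the pulled back cover `τ_{i-1}^{-1} 𝒰_i`. -/
def jointFiber (T1 : X1 → X1) (a : Fin k → ℝ) (𝒱 : Fin k → Set (Set X1)) (n : ℕ) :
    Set (Set X1) :=
  {A | ∃ V : Fin k → ℕ → Set X1,
      (∀ i, ∀ l < ⌈cw a i * (n : ℝ)⌉₊, V i l ∈ 𝒱 i) ∧
      A = ⋂ i : Fin k, ⋂ l ∈ Finset.range ⌈cw a i * (n : ℝ)⌉₊, (T1^[l]) ⁻¹' V i l}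

/-- `Λ^{𝐚,s}_{N,{𝒰_i}}(Z,f)`. -/
noncomputable def lamLocN (T1 : X1 → X1) (a : Fin k → ℝ) (𝒱 : Fin k → Set (Set X1))
    (f : X1 → ℝ) (s : ℝ) (N : ℕ) (Z : Set X1) : ℝ≥0∞ :=
  ⨅ (D : Set (ℕ × Set X1)) (_ : D.Countable)
    (_ : ∀ p ∈ D, N ≤ p.1 ∧ MeasurableSet p.2 ∧ ∃ A ∈ jointFiber T1 a 𝒱 p.1, p.2 ⊆ A)
    (_ : Z ⊆ ⋃ p ∈ D, p.2),
    ∑' p : D, pterm T1 f (a 0) s p.1.1 p.1.2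

/-- `Λ^{𝐚,s}_{{𝒰_i}}(Z,f)`. -/
noncomputable def lamLoc (T1 : X1 → X1) (a : Fin k → ℝ) (𝒱 : Fin k → Set (Set X1))
    (f : X1 → ℝ) (s : ℝ) (Z : Set X1) : ℝ≥0∞ :=
  ⨆ N : ℕ, lamLocN T1 a 𝒱 f s N Z

/-- the local 𝐚-weighted topological pressure `P^𝐚(T₁, Z, {𝒰_i}, f)`, expressed through the
pulled-back covers `𝒱 i = τ_{i-1}^{-1} 𝒰_i`. -/
noncomputable def PLoc (T1 : X1 → X1) (a : Fin k → ℝ) (𝒱 : Fin k → Set (Set X1))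
    (Z : Set X1) (f : X1 → ℝ) : EReal :=
  sInf (Real.toEReal '' {s : ℝ | lamLoc T1 a 𝒱 f s Z = 0})

/-- `W^{𝐚,s}_{N,{𝒰_i}}(Z,f)`. -/
noncomputable def wLocN (T1 : X1 → X1) (a : Fin k → ℝ) (𝒱 : Fin k → Set (Set X1))
    (f : X1 → ℝ) (s : ℝ) (N : ℕ) (Z : Set X1) : ℝ≥0∞ :=
  ⨅ (D : Set (ℕ × Set X1 × ℝ≥0∞)) (_ : D.Countable)
    (_ : ∀ p ∈ D, N ≤ p.1 ∧ MeasurableSet p.2.1 ∧ 0 < p.2.2 ∧ p.2.2 ≠ ⊤ ∧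
        ∃ A ∈ jointFiber T1 a 𝒱 p.1, p.2.1 ⊆ A)
    (_ : ∀ z ∈ Z, 1 ≤ ∑' p : D, (p.1.2.1).indicator (fun _ => p.1.2.2) z),
    ∑' p : D, p.1.2.2 * pterm T1 f (a 0) s p.1.1 p.1.2.1

/-- `W^{𝐚,s}_{{𝒰_i}}(Z,f)`. -/
noncomputable def wLoc (T1 : X1 → X1) (a : Fin k → ℝ) (𝒱 : Fin k → Set (Set X1))
    (f : X1 → ℝ) (s : ℝ) (Z : Set X1) : ℝ≥0∞ :=
  ⨆ N : ℕ, wLocN T1 a 𝒱 f s N Z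

/-- the local average 𝐚-weighted topological pressure `P_W^𝐚(T₁, Z, {𝒰_i}, f)`. -/
noncomputable def PWLoc (T1 : X1 → X1) (a : Fin k → ℝ) (𝒱 : Fin k → Set (Set X1))
    (Z : Set X1) (f : X1 → ℝ) : EReal :=
  sInf (Real.toEReal '' {s : ℝ | wLoc T1 a 𝒱 f s Z = 0})

end Local

/-- iterated join `(𝒰)_0^{n-1} = ⋁_{l=0}^{n-1} T^{-l} 𝒰` of a cover. -/
def covJoinT {X : Type*} (T : X → X) (𝒰 : Set (Set X)) (n : ℕ) : Set (Set X) :=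
  {A | ∃ u : ℕ → Set X, (∀ l < n, u l ∈ 𝒰) ∧
      A = ⋂ l ∈ Finset.range n, (T^[l]) ⁻¹' u l}

/-- the join `⋁_{j=i}^{k} 𝒱 j` of covers of a single space (in applications
`𝒱 j = τ_{j-1}^{-1} 𝒰_j`). -/
def joinFrom {X1 : Type*} (𝒱 : Fin k → Set (Set X1)) (i : Fin k) : Set (Set X1) :=
  {A | ∃ V : Fin k → Set X1, (∀ j, i ≤ j → V j ∈ 𝒱 j) ∧ A = ⋂ j ∈ Finset.Ici i, V j}

/-- a finite measurable partition (indexed). -/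
def IsPart {X : Type*} [MeasurableSpace X] {ι : Type*} (β : ι → Set X) : Prop :=
  (∀ i, MeasurableSet (β i)) ∧ (∀ i j, i ≠ j → Disjoint (β i) (β j)) ∧ ⋃ i, β i = Set.univ

/-- the static entropy `H_μ(β) = -∑ μ(B) log μ(B)` of a finite (indexed) partition. -/
noncomputable def entH {X : Type*} [MeasurableSpace X] {ι : Type*} [Fintype ι]
    (μ : Measure X) (β : ι → Set X) : ℝ :=
  ∑ i, Real.negMulLog (μ (β i)).toReal

/-- the dynamical join `⋁_{l=0}^{n-1} T^{-l} β` of a partition. -/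
def dynJoin {X : Type*} (T : X → X) {ι : Type*} (β : ι → Set X) (n : ℕ) :
    (Fin n → ι) → Set X :=
  fun c => ⋂ l : Fin n, (T^[(l : ℕ)]) ⁻¹' β (c l)

/-- the measure-theoretic entropy `h_μ(T, β) = lim_n (1/n) H_μ(⋁_{l<n} T^{-l}β)` of `T`
relative to a finite partition. -/
noncomputable def hPart {X : Type*} [MeasurableSpace X] {ι : Type*} [Fintype ι]
    (μ : Measure X) (T : X → X) (β : ι → Set X) : EReal :=
  Filter.liminf (fun n : ℕ => ((entH μ (dynJoin T β n) / n : ℝ) : EReal)) Filter.atTop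

/-- the Kolmogorov–Sinai entropy `h_μ(T)`. -/
noncomputable def hKS {X : Type*} [MeasurableSpace X] (μ : Measure X) (T : X → X) : EReal :=
  ⨆ p : (Σ m : ℕ, {β : Fin m → Set X // IsPart β}), hPart μ T p.2.1

/-- `H_μ(𝒰) = inf {H_μ(β) : β a finite measurable partition refining 𝒰}`. -/
noncomputable def covH {X : Type*} [MeasurableSpace X] (μ : Measure X)
    (𝒰 : Set (Set X)) : ℝ :=
  sInf {h : ℝ | ∃ (m : ℕ) (β : Fin m → Set X), IsPart β ∧
      (∀ i, ∃ U ∈ 𝒰, β i ⊆ U) ∧ h = entH μ β}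

/-- the local measure-theoretic entropy `h_μ(T, 𝒰) = lim_n (1/n) H_μ((𝒰)_0^{n-1})` of `T`
relative to an open cover. -/
noncomputable def hCov {X : Type*} [MeasurableSpace X] (μ : Measure X) (T : X → X)
    (𝒰 : Set (Set X)) : EReal :=
  Filter.liminf (fun n : ℕ => ((covH μ (covJoinT T 𝒰 n) / n : ℝ) : EReal)) Filter.atTop

/-- `h⁺_μ(T,𝒰) = inf {h_μ(T,β) : β a finite measurable partition refining 𝒰}`. -/
noncomputable def hCovPlus {X : Type*} [MeasurableSpace X] (μ : Measure X) (T : X → X)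
    (𝒰 : Set (Set X)) : EReal :=
  ⨅ p : (Σ m : ℕ, {β : Fin m → Set X // IsPart β ∧ ∀ i, ∃ U ∈ 𝒰, β i ⊆ U}),
    hPart μ T p.2.1

/-- the join `⋁_{j=i}^{k} γ j` of partitions of a single space (in applications
`γ j = τ_{j-1}^{-1} α_j`). -/
def partJoinFrom {X1 : Type*} {ι : Fin k → Type*} (γ : ∀ j, ι j → Set X1) (i : Fin k) :
    (∀ j : {j : Fin k // i ≤ j}, ι j) → Set X1 :=
  fun c => ⋂ j : {j : Fin k // i ≤ j}, γ j (c j)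

/-- the partition `⋁_{i=1}^k (γ_i)_0^{⌈(a_1+…+a_i)N⌉-1}` on the first space, where
`γ i = τ_{i-1}^{-1} α_i`. -/
def bigPartJoin {X1 : Type*} (T1 : X1 → X1) (a : Fin k → ℝ) {ι : Fin k → Type*}
    (γ : ∀ i, ι i → Set X1) (N : ℕ) :
    (∀ i : Fin k, Fin ⌈cw a i * (N : ℝ)⌉₊ → ι i) → Set X1 :=
  fun c => ⋂ i : Fin k, ⋂ l : Fin ⌈cw a i * (N : ℝ)⌉₊, (T1^[(l : ℕ)]) ⁻¹' γ i (c i l)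

/-- conditional entropy `H_μ(γ|β) = H_μ(γ ∨ β) - H_μ(β)`. -/
noncomputable def condEnt {X : Type*} [MeasurableSpace X] {ι κ : Type*} [Fintype ι] [Fintype κ]
    (μ : Measure X) (γ : ι → Set X) (β : κ → Set X) : ℝ :=
  entH μ (fun p : ι × κ => γ p.1 ∩ β p.2) - entH μ β

/-- the oscillation `w_f(⋁_{i=1}^k τ_{i-1}^{-1} 𝒰_i)` of `f` on the joined cover, where
`𝒱 i = τ_{i-1}^{-1} 𝒰_i`. -/
noncomputable def wfJoin {X1 : Type*} (f : X1 → ℝ) (𝒱 : Fin k → Set (Set X1)) : ℝ :=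
  sSup {d : ℝ | ∃ V : Fin k → Set X1, (∀ i, V i ∈ 𝒱 i) ∧
      ∃ x ∈ ⋂ i, V i, ∃ y ∈ ⋂ i, V i, d = |f x - f y|}

/-- the topological support of a measure. -/
def msupp {X : Type*} [TopologicalSpace X] [MeasurableSpace X] (μ : Measure X) : Set X :=
  {x | ∀ U : Set X, IsOpen U → x ∈ U → 0 < μ U}

/-!
Write `γ j = τ j ⁻¹' α j` and, for a finite set `S` of pairs `(j, l)`, let `H S` be the entropy of
the join of the partitions `T⁻ˡ γ j`, `(j, l) ∈ S`. Then `H` is monotone, invariant under time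
shifts (`μ` is `T`-invariant) and strongly subadditive, because conditioning on a finer partition
lowers conditional entropy. By Fekete's lemma `h_μ(T, ⋁_{j ≥ t} γ j)` is the limit `r t` of
`H ({j ≥ t} × [0, n)) / n`.

The partition on the right is the join over the staircase `{(j, l) : l < L j}` with
`L j = ⌈(a 0 + ⋯ + a j) N⌉`. Peel it off one row at a time: conditioned on the rows `j > t`, the
row `t` has entropy at least `L t * (r t - r (t + 1))`, since cutting a long row into blocks shows
that `r t - r (t + 1)` is at most the conditional entropy of a block per unit of time. Summation by
parts turns `∑ t, (a 0 + ⋯ + a t) * (r t - r (t + 1))` into `∑ t, a t * r t`.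
-/

section Partition

variable {Y : Type*} [MeasurableSpace Y]

lemma IsPart.preimage {Z : Type*} [MeasurableSpace Z] {ι : Type*} {β : ι → Set Z}
    (hβ : IsPart β) {f : Y → Z} (hf : Measurable f) : IsPart fun i => f ⁻¹' β i := by
  refine ⟨fun i => hf (hβ.1 i), fun i j hij => (hβ.2.1 i j hij).preimage f, ?_⟩
  rw [← Set.preimage_iUnion, hβ.2.2, Set.preimage_univ]

lemma IsPart.iInter {J : Type*} [Countable J] {κ : J → Type*} {δ : ∀ j, κ j → Set Y}
    (hδ : ∀ j, IsPart (δ j)) : IsPart fun c : (∀ j, κ j) => ⋂ j, δ j (c j) := by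
  refine ⟨fun c => MeasurableSet.iInter fun j => (hδ j).1 _, fun c c' hne => ?_, ?_⟩
  · obtain ⟨j, hj⟩ := Function.ne_iff.1 hne
    exact ((hδ j).2.1 _ _ hj).mono (Set.iInter_subset _ j) (Set.iInter_subset _ j)
  · refine Set.eq_univ_of_forall fun x => ?_
    have hcover : ∀ j, ∃ t, x ∈ δ j t := fun j =>
      Set.mem_iUnion.1 ((hδ j).2.2.symm ▸ Set.mem_univ x)
    choose c hc using hcover
    exact Set.mem_iUnion.2 ⟨c, Set.mem_iInter.2 hc⟩

lemma IsPart.inter {ι κ : Type*} {β : ι → Set Y} {β' : κ → Set Y} (hβ : IsPart β)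
    (hβ' : IsPart β') : IsPart fun p : ι × κ => β p.1 ∩ β' p.2 := by
  refine ⟨fun p => (hβ.1 p.1).inter (hβ'.1 p.2), ?_, ?_⟩
  · rintro ⟨i, u⟩ ⟨j, v⟩ hne
    by_cases hij : i = j
    · subst hij
      exact (hβ'.2.1 u v fun h => hne (by rw [h])).mono
        Set.inter_subset_right Set.inter_subset_right
    · exact (hβ.2.1 i j hij).mono Set.inter_subset_left Set.inter_subset_left
  · refine Set.eq_univ_of_forall fun x => ?_
    obtain ⟨i, hi⟩ := Set.mem_iUnion.1 (hβ.2.2.symm ▸ Set.mem_univ x)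
    obtain ⟨u, hu⟩ := Set.mem_iUnion.1 (hβ'.2.2.symm ▸ Set.mem_univ x)
    exact Set.mem_iUnion.2 ⟨(i, u), hi, hu⟩

end Partition

section Entropy

open Real Function

lemma negMulLog_sum_le {ι : Type*} (s : Finset ι) {p : ι → ℝ} (hp : ∀ i ∈ s, 0 ≤ p i) :
    negMulLog (∑ i ∈ s, p i) ≤ ∑ i ∈ s, negMulLog (p i) := by
  rw [negMulLog, neg_mul, Finset.sum_mul, ← Finset.sum_neg_distrib]
  refine Finset.sum_le_sum fun i hi => ?_
  rcases (hp i hi).eq_or_lt with h | h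
  · simp [← h]
  · rw [negMulLog, neg_mul, neg_le_neg_iff]
    exact mul_le_mul_of_nonneg_left (log_le_log h (Finset.single_le_sum hp hi)) h.le

/-- The log-sum inequality: Jensen's inequality for the perspective of `negMulLog`. -/
lemma sum_mul_negMulLog_div_le {ι : Type*} (s : Finset ι) {r q : ι → ℝ}
    (hr : ∀ u ∈ s, 0 ≤ r u) (hrq : ∀ u ∈ s, r u ≤ q u) :
    ∑ u ∈ s, q u * negMulLog (r u / q u)
      ≤ (∑ u ∈ s, q u) * negMulLog ((∑ u ∈ s, r u) / ∑ u ∈ s, q u) := by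
  have hq : ∀ u ∈ s, 0 ≤ q u := fun u hu => (hr u hu).trans (hrq u hu)
  obtain hQ | hQ := (Finset.sum_nonneg hq).eq_or_lt
  · have hq0 : ∀ u ∈ s, q u = 0 := (Finset.sum_eq_zero_iff_of_nonneg hq).1 hQ.symm
    rw [← hQ, zero_mul]
    exact (Finset.sum_eq_zero fun u hu => by rw [hq0 u hu, zero_mul]).le
  set Q := ∑ u ∈ s, q u
  have hmean : ∑ u ∈ s, q u / Q * (r u / q u) = (∑ u ∈ s, r u) / Q := by
    rw [Finset.sum_div]
    refine Finset.sum_congr rfl fun u hu => ?_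
    rcases (hq u hu).eq_or_lt with h | h
    · rw [← h, le_antisymm (h ▸ hrq u hu) (hr u hu)]
      simp
    · field_simp
  have hjensen := concaveOn_negMulLog.le_map_sum (t := s) (w := fun u => q u / Q)
    (p := fun u => r u / q u) (fun u hu => div_nonneg (hq u hu) hQ.le)
    (by rw [← Finset.sum_div, div_self hQ.ne'])
    (fun u hu => Set.mem_Ici.2 (div_nonneg (hr u hu) (hq u hu)))
  simp only [smul_eq_mul, hmean] at hjensen
  calc ∑ u ∈ s, q u * negMulLog (r u / q u)
      = Q * ∑ u ∈ s, q u / Q * negMulLog (r u / q u) := by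
        rw [Finset.mul_sum]
        exact Finset.sum_congr rfl fun u _ => by rw [← mul_assoc, mul_div_cancel₀ _ hQ.ne']
    _ ≤ Q * negMulLog ((∑ u ∈ s, r u) / Q) := mul_le_mul_of_nonneg_left hjensen hQ.le

variable {Y : Type*} [MeasurableSpace Y] {μ : Measure Y}

lemma entH_nonneg [IsProbabilityMeasure μ] {ι : Type*} [Fintype ι] (β : ι → Set Y) :
    0 ≤ entH μ β :=
  Finset.sum_nonneg fun _ _ => negMulLog_nonneg ENNReal.toReal_nonneg measureReal_le_one

variable [IsFiniteMeasure μ]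

lemma IsPart.measureReal_eq_sum_inter {ι : Type*} [Fintype ι] {β : ι → Set Y}
    (hβ : IsPart β) {W : Set Y} (hW : MeasurableSet W) :
    μ.real W = ∑ i, μ.real (β i ∩ W) := by
  conv_lhs => rw [← Set.univ_inter W, ← hβ.2.2, Set.iUnion_inter]
  exact measureReal_iUnion_fintype
    (fun i j hij => (hβ.2.1 i j hij).mono Set.inter_subset_left Set.inter_subset_left)
    fun i => (hβ.1 i).inter hW

lemma IsPart.measureReal_inter_eq_sum_fiber {ι κ : Type*} [Fintype ι] [DecidableEq κ]
    {A : ι → Set Y} {B : κ → Set Y} (hA : IsPart A) (hB : Pairwise (Disjoint on B))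
    {g : ι → κ} (hg : ∀ u, A u ⊆ B (g u)) {W : Set Y} (hW : MeasurableSet W) (v : κ) :
    μ.real (W ∩ B v) = ∑ u ∈ Finset.univ.filter (g · = v), μ.real (W ∩ A u) := by
  have hset : W ∩ B v = ⋃ u ∈ Finset.univ.filter (g · = v), W ∩ A u := by
    ext x
    simp only [Set.mem_inter_iff, Set.mem_iUnion, Finset.mem_filter, Finset.mem_univ,
      true_and, exists_prop]
    constructor
    · rintro ⟨hxW, hxB⟩
      obtain ⟨u, hu⟩ := Set.mem_iUnion.1 (hA.2.2.symm ▸ Set.mem_univ x)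
      refine ⟨u, by_contra fun hne => Set.disjoint_left.1 (hB hne) (hg u hu) hxB, hxW, hu⟩
    · rintro ⟨u, rfl, hxW, hxA⟩
      exact ⟨hxW, hg u hxA⟩
  rw [hset, measureReal_biUnion_finset]
  · exact fun u _ u' _ hne =>
      (hA.2.1 u u' hne).mono Set.inter_subset_right Set.inter_subset_right
  · exact fun u _ => hW.inter (hA.1 u)

lemma entH_le_of_refines {ι κ : Type*} [Fintype ι] [Fintype κ] {β : ι → Set Y}
    {β' : κ → Set Y} (hβ : IsPart β) (hβ' : IsPart β') (h : ∀ i, ∃ j, β i ⊆ β' j) :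
    entH μ β' ≤ entH μ β := by
  classical
  choose g hg using h
  calc entH μ β'
      = ∑ v, negMulLog (∑ u ∈ Finset.univ.filter (g · = v), μ.real (β u)) := by
        refine Finset.sum_congr rfl fun v _ => ?_
        rw [← measureReal_def]
        simpa using congrArg negMulLog
          (hβ.measureReal_inter_eq_sum_fiber (μ := μ) hβ'.2.1 hg MeasurableSet.univ v)
    _ ≤ ∑ v, ∑ u ∈ Finset.univ.filter (g · = v), negMulLog (μ.real (β u)) :=
        Finset.sum_le_sum fun v _ => negMulLog_sum_le _ fun u _ => measureReal_nonneg
    _ = entH μ β := Finset.sum_fiberwise _ _ _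

lemma entH_eq_of_refines {ι κ : Type*} [Fintype ι] [Fintype κ] {β : ι → Set Y}
    {β' : κ → Set Y} (hβ : IsPart β) (hβ' : IsPart β') (h : ∀ i, ∃ j, β i ⊆ β' j)
    (h' : ∀ j, ∃ i, β' j ⊆ β i) : entH μ β = entH μ β' :=
  (entH_le_of_refines hβ' hβ h').antisymm (entH_le_of_refines hβ hβ' h)

lemma condEnt_eq_sum {ι κ : Type*} [Fintype ι] [Fintype κ] {γ : ι → Set Y}
    {β : κ → Set Y} (hγ : IsPart γ) (hβ : ∀ u, MeasurableSet (β u)) :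
    condEnt μ γ β
      = ∑ i, ∑ u, μ.real (β u) * negMulLog (μ.real (γ i ∩ β u) / μ.real (β u)) := by
  have hcell : ∀ u, ∑ i, negMulLog (μ.real (γ i ∩ β u)) - negMulLog (μ.real (β u))
      = ∑ i, μ.real (β u) * negMulLog (μ.real (γ i ∩ β u) / μ.real (β u)) := by
    intro u
    rcases (measureReal_nonneg (μ := μ) (s := β u)).eq_or_lt with h | h
    · have h0 : ∀ i, μ.real (γ i ∩ β u) = 0 := fun i =>
        le_antisymm (h ▸ measureReal_mono Set.inter_subset_right) measureReal_nonneg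
      simp [h0, ← h]
    · have hsplit : ∀ i, negMulLog (μ.real (γ i ∩ β u))
          = μ.real (β u) * negMulLog (μ.real (γ i ∩ β u) / μ.real (β u))
            + μ.real (γ i ∩ β u) / μ.real (β u) * negMulLog (μ.real (β u)) := fun i => by
        rw [← negMulLog_mul, div_mul_cancel₀ _ h.ne']
      simp_rw [hsplit, Finset.sum_add_distrib, ← Finset.sum_mul, ← Finset.sum_div,
        ← hγ.measureReal_eq_sum_inter (hβ u), div_self h.ne', one_mul, add_sub_cancel_right]
  simp only [condEnt, entH, ← measureReal_def]
  rw [Fintype.sum_prod_type, Finset.sum_comm, ← Finset.sum_sub_distrib,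
    Finset.sum_congr rfl fun u _ => hcell u, Finset.sum_comm]

lemma condEnt_le_of_refines {ι κ κ' : Type*} [Fintype ι] [Fintype κ] [Fintype κ']
    {γ : ι → Set Y} {A : κ → Set Y} {B : κ' → Set Y} (hγ : IsPart γ) (hA : IsPart A)
    (hB : IsPart B) (h : ∀ u, ∃ v, A u ⊆ B v) : condEnt μ γ A ≤ condEnt μ γ B := by
  classical
  choose g hg using h
  rw [condEnt_eq_sum hγ hA.1, condEnt_eq_sum hγ hB.1]
  refine Finset.sum_le_sum fun i _ => ?_
  rw [← Finset.sum_fiberwise Finset.univ g]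
  refine Finset.sum_le_sum fun v _ => ?_
  have hB_eq : μ.real (B v) = ∑ u ∈ Finset.univ.filter (g · = v), μ.real (A u) := by
    simpa using hA.measureReal_inter_eq_sum_fiber (μ := μ) hB.2.1 hg MeasurableSet.univ v
  rw [hA.measureReal_inter_eq_sum_fiber hB.2.1 hg (hγ.1 i) v, hB_eq]
  exact sum_mul_negMulLog_div_le _ (fun u _ => measureReal_nonneg)
    fun u _ => measureReal_mono Set.inter_subset_right

end Entropy

section Join

variable {Y : Type*} {ι : Type*} {κ : ι → Type*}

def joinOn (β : ∀ i, κ i → Set Y) (S : Finset ι) : (∀ p : S, κ p) → Set Y :=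
  fun c => ⋂ p : S, β p (c p)

variable {β : ∀ i, κ i → Set Y}

lemma joinOn_subset_of_subset {S S' : Finset ι} (h : S ⊆ S') (c : ∀ p : S', κ p) :
    joinOn β S' c ⊆ joinOn β S fun p => c ⟨p, h p.2⟩ :=
  Set.subset_iInter fun p => Set.iInter_subset _ (⟨p, h p.2⟩ : S')

variable [MeasurableSpace Y]

lemma isPart_joinOn (hβ : ∀ i, IsPart (β i)) (S : Finset ι) : IsPart (joinOn β S) :=
  IsPart.iInter fun p => hβ p

variable [DecidableEq ι] [∀ i, Fintype (κ i)]

noncomputable def entJoin (μ : Measure Y) (β : ∀ i, κ i → Set Y) (S : Finset ι) : ℝ :=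
  entH μ (joinOn β S)

variable {μ : Measure Y}

lemma entJoin_empty [IsProbabilityMeasure μ] : entJoin μ β ∅ = 0 := by
  simp [entJoin, entH, joinOn]

variable [IsFiniteMeasure μ]

lemma entJoin_mono (hβ : ∀ i, IsPart (β i)) {S S' : Finset ι} (h : S ⊆ S') :
    entJoin μ β S ≤ entJoin μ β S' :=
  entH_le_of_refines (isPart_joinOn hβ S') (isPart_joinOn hβ S) fun c =>
    ⟨_, joinOn_subset_of_subset h c⟩

lemma condEnt_joinOn (hβ : ∀ i, IsPart (β i)) (S S' : Finset ι) :
    condEnt μ (joinOn β S) (joinOn β S') = entJoin μ β (S ∪ S') - entJoin μ β S' := by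
  rw [condEnt, entJoin, entJoin]
  congr 1
  refine entH_eq_of_refines ((isPart_joinOn hβ S).inter (isPart_joinOn hβ S'))
    (isPart_joinOn hβ _) (fun c => ?_) fun c => ?_
  · refine ⟨fun p => if h : (p : ι) ∈ S then c.1 ⟨p, h⟩
      else c.2 ⟨p, (Finset.mem_union.1 p.2).resolve_left h⟩, ?_⟩
    rintro x ⟨hx, hx'⟩
    refine Set.mem_iInter.2 fun p => ?_
    by_cases h : (p : ι) ∈ S
    · simpa [h] using Set.mem_iInter.1 hx ⟨p, h⟩
    · simpa [h] using Set.mem_iInter.1 hx' ⟨p, (Finset.mem_union.1 p.2).resolve_left h⟩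
  · exact ⟨(_, _), Set.subset_inter (joinOn_subset_of_subset Finset.subset_union_left c)
      (joinOn_subset_of_subset Finset.subset_union_right c)⟩

lemma entJoin_union_sub_le (hβ : ∀ i, IsPart (β i)) (S : Finset ι) {A B : Finset ι}
    (h : B ⊆ A) :
    entJoin μ β (S ∪ A) - entJoin μ β A ≤ entJoin μ β (S ∪ B) - entJoin μ β B := by
  rw [← condEnt_joinOn hβ, ← condEnt_joinOn hβ]
  exact condEnt_le_of_refines (isPart_joinOn hβ S) (isPart_joinOn hβ A) (isPart_joinOn hβ B)
    fun c => ⟨_, joinOn_subset_of_subset h c⟩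

lemma entJoin_union_le [IsProbabilityMeasure μ] (hβ : ∀ i, IsPart (β i)) (S S' : Finset ι) :
    entJoin μ β (S ∪ S') ≤ entJoin μ β S + entJoin μ β S' := by
  have h := entJoin_union_sub_le (μ := μ) hβ S (Finset.empty_subset S')
  rw [Finset.union_empty, entJoin_empty, sub_zero] at h
  linarith

lemma entJoin_biUnion_union_sub_le (hβ : ∀ i, IsPart (β i)) (A : ℕ → Finset ι)
    (C : Finset ι) (q : ℕ) :
    entJoin μ β ((Finset.range q).biUnion A ∪ C) - entJoin μ β C
      ≤ ∑ i ∈ Finset.range q, (entJoin μ β (A i ∪ C) - entJoin μ β C) := by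
  induction q with
  | zero => simp
  | succ q ih =>
    have h := entJoin_union_sub_le (μ := μ) hβ (A q)
      (Finset.subset_union_right (s₁ := (Finset.range q).biUnion A) (s₂ := C))
    rw [Finset.range_add_one, Finset.biUnion_insert, Finset.union_assoc,
      Finset.sum_insert Finset.notMem_range_self]
    linarith

end Join

section Dynamics

variable {Y : Type*} {ι : Type*} {κ : ι → Type*}

def dynFamily (T : Y → Y) (γ : ∀ i, κ i → Set Y) : ∀ p : ι × ℕ, κ p.1 → Set Y :=
  fun p c => T^[p.2] ⁻¹' γ p.1 c

variable [MeasurableSpace Y] {T : Y → Y} {γ : ∀ i, κ i → Set Y}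

lemma isPart_dynFamily (hT : Measurable T) (hγ : ∀ i, IsPart (γ i)) (p : ι × ℕ) :
    IsPart (dynFamily T γ p) :=
  (hγ p.1).preimage (hT.iterate p.2)

variable [DecidableEq ι]

lemma product_range_add (F : Finset ι) (m n : ℕ) :
    F ×ˢ Finset.range (m + n)
      = F ×ˢ Finset.range m ∪ (F ×ˢ Finset.range n).image (Prod.map id (· + m)) := by
  ext ⟨j, l⟩
  simp only [Finset.mem_union, Finset.mem_product, Finset.mem_range, Finset.mem_image,
    Prod.exists, Prod.map_apply, id_eq, Prod.mk.injEq]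
  constructor
  · rintro ⟨hj, hl⟩
    by_cases h : l < m
    · exact Or.inl ⟨hj, h⟩
    · exact Or.inr ⟨j, l - m, ⟨hj, by omega⟩, rfl, by omega⟩
  · rintro (⟨hj, hl⟩ | ⟨j', l', ⟨hj, hl⟩, rfl, rfl⟩)
    · exact ⟨hj, by omega⟩
    · exact ⟨hj, by omega⟩

lemma product_range_mul (F : Finset ι) (q m : ℕ) :
    F ×ˢ Finset.range (q * m)
      = (Finset.range q).biUnion fun i =>
          (F ×ˢ Finset.range m).image (Prod.map id (· + i * m)) := by
  induction q with
  | zero => simp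
  | succ q ih =>
    rw [Nat.succ_mul, product_range_add, ih, Finset.range_add_one, Finset.biUnion_insert,
      Finset.union_comm]

variable [∀ i, Fintype (κ i)] {μ : Measure Y} [IsProbabilityMeasure μ]

lemma entJoin_image_shift (hT : MeasurePreserving T μ μ) (hγ : ∀ i, IsPart (γ i))
    (S : Finset (ι × ℕ)) (n : ℕ) :
    entJoin μ (dynFamily T γ) (S.image (Prod.map id (· + n)))
      = entJoin μ (dynFamily T γ) S := by
  have hβ := isPart_dynFamily hT.measurable hγ
  have hTn := hT.iterate n
  have hback : ∀ p ∈ S.image (Prod.map id (· + n)), n ≤ p.2 ∧ (p.1, p.2 - n) ∈ S := by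
    intro p hp
    obtain ⟨q, hq, rfl⟩ := Finset.mem_image.1 hp
    simpa using hq
  calc entJoin μ (dynFamily T γ) (S.image (Prod.map id (· + n)))
      = entH μ fun c => T^[n] ⁻¹' joinOn (dynFamily T γ) S c := by
        refine entH_eq_of_refines (isPart_joinOn hβ _)
          ((isPart_joinOn hβ S).preimage hTn.measurable) (fun c => ?_) fun c => ?_
        · refine ⟨fun p => c ⟨(p.1.1, p.1.2 + n), Finset.mem_image_of_mem _ p.2⟩, ?_⟩
          intro x hx
          refine Set.mem_iInter.2 fun p => ?_
          have h := Set.mem_iInter.1 hx ⟨(p.1.1, p.1.2 + n), Finset.mem_image_of_mem _ p.2⟩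
          simpa [dynFamily, Function.iterate_add_apply] using h
        · refine ⟨fun p => c ⟨(p.1.1, p.1.2 - n), (hback p p.2).2⟩, ?_⟩
          intro x hx
          refine Set.mem_iInter.2 fun p => ?_
          have h := Set.mem_iInter.1 hx ⟨(p.1.1, p.1.2 - n), (hback p p.2).2⟩
          simp only [dynFamily, Set.mem_preimage, ← Function.iterate_add_apply,
            Nat.sub_add_cancel (hback p p.2).1] at h
          exact h
    _ = entJoin μ (dynFamily T γ) S :=
        Finset.sum_congr rfl fun c _ => by
          rw [hTn.measure_preimage ((isPart_joinOn hβ S).1 c).nullMeasurableSet]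

lemma subadditive_entJoin_product_range (hT : MeasurePreserving T μ μ)
    (hγ : ∀ i, IsPart (γ i)) (F : Finset ι) :
    Subadditive fun n => entJoin μ (dynFamily T γ) (F ×ˢ Finset.range n) := fun m n => by
  dsimp only
  rw [product_range_add, ← entJoin_image_shift hT hγ (F ×ˢ Finset.range n) m]
  exact entJoin_union_le (isPart_dynFamily hT.measurable hγ) _ _

/-- A genuine limit by Fekete's lemma, see `tendsto_entRate`. -/
noncomputable def entRate (μ : Measure Y) (T : Y → Y) (γ : ∀ i, κ i → Set Y)
    (F : Finset ι) : ℝ :=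
  limUnder atTop fun n : ℕ => entJoin μ (dynFamily T γ) (F ×ˢ Finset.range n) / n

lemma tendsto_entRate (hT : MeasurePreserving T μ μ) (hγ : ∀ i, IsPart (γ i))
    (F : Finset ι) :
    Tendsto (fun n : ℕ => entJoin μ (dynFamily T γ) (F ×ˢ Finset.range n) / n) atTop
      (𝓝 (entRate μ T γ F)) := by
  have hbdd : BddBelow (Set.range fun n : ℕ =>
      entJoin μ (dynFamily T γ) (F ×ˢ Finset.range n) / n) :=
    ⟨0, Set.forall_mem_range.2 fun n => div_nonneg (entH_nonneg _) n.cast_nonneg⟩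
  have h := (subadditive_entJoin_product_range hT hγ F).tendsto_lim hbdd
  rwa [entRate, h.limUnder_eq]

lemma entRate_mono (hT : MeasurePreserving T μ μ) (hγ : ∀ i, IsPart (γ i))
    {F F' : Finset ι} (h : F ⊆ F') : entRate μ T γ F ≤ entRate μ T γ F' :=
  le_of_tendsto_of_tendsto' (tendsto_entRate hT hγ F) (tendsto_entRate hT hγ F') fun n =>
    div_le_div_of_nonneg_right (entJoin_mono (isPart_dynFamily hT.measurable hγ)
      (Finset.product_subset_product_left h)) n.cast_nonneg

lemma entRate_empty : entRate μ T γ ∅ = 0 := by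
  simpa [entRate, entJoin_empty] using tendsto_const_nhds.limUnder_eq

/-- Widen the condition `F × [0, qm)` to `F × [0, qm + M)`, at a cost of at most `H (F × [0, M))`,
and cut `{j} × [0, qm)` into `q` shifted copies of `{j} × [0, m)`: conditioned on the wider
rectangle, each copy costs at most the bracket on the right, by shift invariance. -/
lemma entJoin_insert_sub_le (hT : MeasurePreserving T μ μ) (hγ : ∀ i, IsPart (γ i)) (j : ι)
    (F : Finset ι) (q m M : ℕ) :
    entJoin μ (dynFamily T γ) (insert j F ×ˢ Finset.range (q * m))
        - entJoin μ (dynFamily T γ) (F ×ˢ Finset.range (q * m))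
      ≤ q * (entJoin μ (dynFamily T γ) ({j} ×ˢ Finset.range m ∪ F ×ˢ Finset.range M)
          - entJoin μ (dynFamily T γ) (F ×ˢ Finset.range M))
        + entJoin μ (dynFamily T γ) (F ×ˢ Finset.range M) := by
  have hβ := isPart_dynFamily hT.measurable hγ
  set H := entJoin μ (dynFamily T γ)
  set c₀ := H ({j} ×ˢ Finset.range m ∪ F ×ˢ Finset.range M) - H (F ×ˢ Finset.range M)
  set C := F ×ˢ Finset.range (q * m + M)
  have hwiden :
      H (insert j F ×ˢ Finset.range (q * m)) ≤ H ({j} ×ˢ Finset.range (q * m) ∪ C) := by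
    rw [Finset.insert_eq, Finset.union_product]
    exact entJoin_mono hβ (Finset.union_subset_union_right
      (Finset.product_subset_product_right (Finset.range_subset_range.2 (Nat.le_add_right _ _))))
  have hC : H C ≤ H (F ×ˢ Finset.range (q * m)) + H (F ×ˢ Finset.range M) :=
    subadditive_entJoin_product_range hT hγ F _ _
  have hchunks : H ({j} ×ˢ Finset.range (q * m) ∪ C) - H C
      ≤ ∑ i ∈ Finset.range q,
          (H (({j} ×ˢ Finset.range m).image (Prod.map id (· + i * m)) ∪ C) - H C) := by
    rw [product_range_mul]
    exact entJoin_biUnion_union_sub_le hβ _ C q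
  have hchunk : ∀ i ∈ Finset.range q,
      H (({j} ×ˢ Finset.range m).image (Prod.map id (· + i * m)) ∪ C) - H C ≤ c₀ := by
    intro i hi
    have hsub : (F ×ˢ Finset.range M).image (Prod.map id (· + i * m)) ⊆ C := by
      have him : i * m ≤ q * m := Nat.mul_le_mul_right m (Finset.mem_range.1 hi).le
      intro p hp
      obtain ⟨⟨a, l⟩, hal, rfl⟩ := Finset.mem_image.1 hp
      simp only [Finset.mem_product, Finset.mem_range] at hal
      simp only [C, Finset.mem_product, Finset.mem_range, Prod.map_apply, id_eq]
      exact ⟨hal.1, by omega⟩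
    refine (entJoin_union_sub_le hβ _ hsub).trans_eq ?_
    rw [← Finset.image_union, entJoin_image_shift hT hγ, entJoin_image_shift hT hγ]
  have hsum := Finset.sum_le_card_nsmul _ _ _ hchunk
  rw [Finset.card_range, nsmul_eq_mul] at hsum
  linarith

lemma mul_entRate_insert_sub_le (hT : MeasurePreserving T μ μ) (hγ : ∀ i, IsPart (γ i))
    (j : ι) (F : Finset ι) (m M : ℕ) :
    m * (entRate μ T γ (insert j F) - entRate μ T γ F)
      ≤ entJoin μ (dynFamily T γ) ({j} ×ˢ Finset.range m ∪ F ×ˢ Finset.range M)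
        - entJoin μ (dynFamily T γ) (F ×ˢ Finset.range M) := by
  set H := entJoin μ (dynFamily T γ)
  set c₀ := H ({j} ×ˢ Finset.range m ∪ F ×ˢ Finset.range M) - H (F ×ˢ Finset.range M)
  obtain rfl | hm := m.eq_zero_or_pos
  · simp [c₀]
  have hmul : Tendsto (fun q : ℕ => q * m) atTop atTop :=
    tendsto_atTop_mono (fun q => Nat.le_mul_of_pos_right q hm) tendsto_id
  have hlhs := ((tendsto_entRate hT hγ (insert j F)).comp hmul).sub
    ((tendsto_entRate hT hγ F).comp hmul)
  have hrhs := (tendsto_const_nhds (x := c₀ / m)).add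
    ((tendsto_const_div_atTop_nhds_zero_nat (H (F ×ˢ Finset.range M))).comp hmul)
  rw [add_zero] at hrhs
  have hbound : ∀ᶠ q : ℕ in atTop,
      H (insert j F ×ˢ Finset.range (q * m)) / ↑(q * m)
          - H (F ×ˢ Finset.range (q * m)) / ↑(q * m)
        ≤ c₀ / m + H (F ×ˢ Finset.range M) / ↑(q * m) := by
    filter_upwards [eventually_gt_atTop 0] with q hq
    have hqm : (0 : ℝ) < ↑(q * m) := by positivity
    rw [← sub_div, div_le_iff₀ hqm, add_mul, div_mul_cancel₀ _ hqm.ne']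
    have h := entJoin_insert_sub_le hT hγ j F q m M
    have hm' : (m : ℝ) ≠ 0 := by positivity
    calc _ ≤ (q : ℝ) * c₀ + H (F ×ˢ Finset.range M) := h
      _ = c₀ / m * ↑(q * m) + H (F ×ˢ Finset.range M) := by push_cast; field_simp
  rw [← le_div_iff₀' (by positivity)]
  exact le_of_tendsto_of_tendsto hlhs hrhs hbound

end Dynamics

section Stair

variable {ι : Type*} [DecidableEq ι]

def stair (F : Finset ι) (L : ι → ℕ) : Finset (ι × ℕ) :=
  F.biUnion fun j => {j} ×ˢ Finset.range (L j)

lemma mem_stair {F : Finset ι} {L : ι → ℕ} {p : ι × ℕ} :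
    p ∈ stair F L ↔ p.1 ∈ F ∧ p.2 < L p.1 := by
  obtain ⟨j, l⟩ := p
  simp only [stair, Finset.mem_biUnion, Finset.mem_product, Finset.mem_singleton,
    Finset.mem_range]
  exact ⟨fun ⟨_, hj, rfl, hl⟩ => ⟨hj, hl⟩, fun ⟨hj, hl⟩ => ⟨j, hj, rfl, hl⟩⟩

lemma stair_insert (j : ι) (F : Finset ι) (L : ι → ℕ) :
    stair (insert j F) L = {j} ×ˢ Finset.range (L j) ∪ stair F L :=
  Finset.biUnion_insert

lemma stair_subset_product {F : Finset ι} {L : ι → ℕ} {M : ℕ} (h : ∀ j ∈ F, L j ≤ M) :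
    stair F L ⊆ F ×ˢ Finset.range M := fun p hp => by
  rw [mem_stair] at hp
  exact Finset.mem_product.2 ⟨hp.1, Finset.mem_range.2 (hp.2.trans_le (h _ hp.1))⟩

end Stair

def tailFrom (t : ℕ) : Finset (Fin k) := Finset.univ.filter fun j => t ≤ (j : ℕ)

lemma tailFrom_zero : tailFrom (k := k) 0 = Finset.univ := by
  simp [tailFrom]

lemma tailFrom_self : tailFrom (k := k) k = ∅ := by
  ext j
  simp [tailFrom, j.isLt]

lemma tailFrom_eq_insert (t : Fin k) : tailFrom t = insert t (tailFrom ((t : ℕ) + 1)) := by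
  ext j
  simp only [tailFrom, Finset.mem_filter, Finset.mem_univ, true_and, Finset.mem_insert,
    Fin.ext_iff]
  omega

lemma sum_cw_mul_sub (a : Fin k → ℝ) (r : ℕ → ℝ) :
    ∑ t : Fin k, cw a t * (r t - r (t + 1)) = ∑ j : Fin k, a j * (r j - r k) := by
  simp_rw [cw, Finset.sum_mul]
  rw [Finset.sum_comm' (t' := Finset.univ) (s' := Finset.Ici) (by simp)]
  refine Finset.sum_congr rfl fun j _ => ?_
  rw [← Finset.mul_sum]
  congr 1
  have h := Finset.sum_map (Finset.Ici j) Fin.valEmbedding fun s => r s - r (s + 1)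
  rw [Fin.map_valEmbedding_Ici] at h
  simp only [Fin.valEmbedding_apply] at h
  rw [← h, ← neg_sub, ← Finset.sum_Ico_sub r j.isLt.le, ← Finset.sum_neg_distrib]
  simp

lemma EReal.coe_finset_sum {ι : Type*} (s : Finset ι) (f : ι → ℝ) :
    ((∑ i ∈ s, f i : ℝ) : EReal) = ∑ i ∈ s, (f i : EReal) :=
  map_sum (⟨⟨Real.toEReal, EReal.coe_zero⟩, EReal.coe_add⟩ : ℝ →+ EReal) f s

section Weighted

variable {Y : Type*} [MeasurableSpace Y] {κ : Fin k → Type*} [∀ i, Fintype (κ i)]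
  {μ : Measure Y} {T : Y → Y} {γ : ∀ i, κ i → Set Y}

lemma entH_dynJoin_partJoinFrom [IsFiniteMeasure μ] (hT : Measurable T)
    (hγ : ∀ i, IsPart (γ i)) (i : Fin k) (n : ℕ) :
    entH μ (dynJoin T (partJoinFrom γ i) n)
      = entJoin μ (dynFamily T γ) (tailFrom i ×ˢ Finset.range n) := by
  have hmem : ∀ p : Fin k × ℕ,
      p ∈ tailFrom (i : ℕ) ×ˢ Finset.range n ↔ i ≤ p.1 ∧ p.2 < n := by
    intro p
    simp only [tailFrom, Finset.mem_product, Finset.mem_filter, Finset.mem_univ, true_and,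
      Finset.mem_range, Fin.le_def]
  refine entH_eq_of_refines
    (IsPart.iInter (δ := fun (l : Fin n) v => T^[l] ⁻¹' partJoinFrom γ i v) fun l =>
      (IsPart.iInter fun j => hγ j.1).preimage (hT.iterate l))
    (isPart_joinOn (isPart_dynFamily hT hγ) _) (fun c => ?_) fun c => ?_
  · refine ⟨fun p => c ⟨p.1.2, ((hmem p).1 p.2).2⟩ ⟨p.1.1, ((hmem p).1 p.2).1⟩,
      fun x hx => ?_⟩
    simp only [dynJoin, partJoinFrom, joinOn, dynFamily, Set.mem_iInter, Set.mem_preimage] at hx ⊢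
    exact fun p => hx ⟨p.1.2, ((hmem p).1 p.2).2⟩ ⟨p.1.1, ((hmem p).1 p.2).1⟩
  · refine ⟨fun l j => c ⟨(j.1, l), (hmem _).2 ⟨j.2, l.2⟩⟩, fun x hx => ?_⟩
    simp only [dynJoin, partJoinFrom, joinOn, dynFamily, Set.mem_iInter, Set.mem_preimage] at hx ⊢
    exact fun l j => hx ⟨(j.1, l), (hmem _).2 ⟨j.2, l.2⟩⟩

lemma entH_bigPartJoin [IsFiniteMeasure μ] (hT : Measurable T) (hγ : ∀ i, IsPart (γ i))
    (a : Fin k → ℝ) (N : ℕ) :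
    entH μ (bigPartJoin T a γ N)
      = entJoin μ (dynFamily T γ) (stair Finset.univ fun i => ⌈cw a i * N⌉₊) := by
  refine entH_eq_of_refines
    (IsPart.iInter fun i => IsPart.iInter fun l : Fin ⌈cw a i * N⌉₊ =>
      (hγ i).preimage (hT.iterate l))
    (isPart_joinOn (isPart_dynFamily hT hγ) _) (fun c => ?_) fun c => ?_
  · refine ⟨fun p => c p.1.1 ⟨p.1.2, (mem_stair.1 p.2).2⟩, fun x hx => ?_⟩
    simp only [bigPartJoin, joinOn, dynFamily, Set.mem_iInter, Set.mem_preimage] at hx ⊢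
    exact fun p => hx p.1.1 ⟨p.1.2, (mem_stair.1 p.2).2⟩
  · refine ⟨fun i l => c ⟨(i, l), mem_stair.2 ⟨Finset.mem_univ i, l.2⟩⟩,
      fun x hx => ?_⟩
    simp only [bigPartJoin, joinOn, dynFamily, Set.mem_iInter, Set.mem_preimage] at hx ⊢
    exact fun i l => hx ⟨(i, l), mem_stair.2 ⟨Finset.mem_univ i, l.2⟩⟩

variable [IsProbabilityMeasure μ]

lemma hPart_partJoinFrom (hT : MeasurePreserving T μ μ) (hγ : ∀ i, IsPart (γ i)) (i : Fin k) :
    hPart μ T (partJoinFrom γ i) = entRate μ T γ (tailFrom i) := by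
  simp_rw [hPart, entH_dynJoin_partJoinFrom hT.measurable hγ]
  exact ((continuous_coe_real_ereal.tendsto _).comp (tendsto_entRate hT hγ _)).liminf_eq

lemma sum_mul_entRate_sub_le (hT : MeasurePreserving T μ μ) (hγ : ∀ i, IsPart (γ i))
    (L : Fin k → ℕ) :
    ∑ t : Fin k, (L t : ℝ) * (entRate μ T γ (tailFrom t) - entRate μ T γ (tailFrom (t + 1)))
      ≤ entJoin μ (dynFamily T γ) (stair Finset.univ L) := by
  have hβ := isPart_dynFamily hT.measurable hγ
  set g : ℕ → ℝ := fun s => entJoin μ (dynFamily T γ) (stair (tailFrom s) L)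
  set M := Finset.univ.sup L
  have hlayer : ∀ t : Fin k, (L t : ℝ) * (entRate μ T γ (tailFrom t)
      - entRate μ T γ (tailFrom (t + 1))) ≤ g t - g (t + 1) := by
    intro t
    have hsub : stair (tailFrom (t + 1)) L ⊆ tailFrom (t + 1) ×ˢ Finset.range M :=
      stair_subset_product fun j _ => Finset.le_sup (Finset.mem_univ j)
    calc _ ≤ entJoin μ (dynFamily T γ) ({t} ×ˢ Finset.range (L t)
              ∪ tailFrom (t + 1) ×ˢ Finset.range M)
            - entJoin μ (dynFamily T γ) (tailFrom (t + 1) ×ˢ Finset.range M) := by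
          rw [tailFrom_eq_insert t]
          exact mul_entRate_insert_sub_le hT hγ t _ (L t) M
      _ ≤ g t - g (t + 1) := by
          simp only [g]
          rw [tailFrom_eq_insert t, stair_insert]
          exact entJoin_union_sub_le hβ _ hsub
  calc _ ≤ ∑ t : Fin k, (g t - g (t + 1)) := Finset.sum_le_sum fun t _ => hlayer t
    _ = g 0 - g k := by
        rw [Fin.sum_univ_eq_sum_range (fun s => g s - g (s + 1)), Finset.sum_range_sub']
    _ = _ := by simp [g, tailFrom_zero, tailFrom_self, stair, entJoin_empty]

lemma mul_sum_entRate_le (hT : MeasurePreserving T μ μ) (hγ : ∀ i, IsPart (γ i))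
    (a : Fin k → ℝ) (N : ℕ) :
    N * ∑ i, a i * entRate μ T γ (tailFrom i)
      ≤ entJoin μ (dynFamily T γ) (stair Finset.univ fun i => ⌈cw a i * N⌉₊) := by
  set r : ℕ → ℝ := fun s => entRate μ T γ (tailFrom s)
  have hr : r k = 0 := by simp [r, tailFrom_self, entRate_empty]
  have hdrop : ∀ t : Fin k, 0 ≤ r t - r (t + 1) := fun t =>
    sub_nonneg.2 <| entRate_mono hT hγ <| by
      rw [tailFrom_eq_insert t]
      exact Finset.subset_insert _ _
  calc (N : ℝ) * ∑ i, a i * r i = ∑ t : Fin k, cw a t * N * (r t - r (t + 1)) := by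
        simp_rw [mul_right_comm _ (N : ℝ), ← Finset.sum_mul, sum_cw_mul_sub, hr, sub_zero,
          mul_comm (N : ℝ)]
    _ ≤ ∑ t : Fin k, (⌈cw a t * N⌉₊ : ℝ) * (r t - r (t + 1)) :=
        Finset.sum_le_sum fun t _ => mul_le_mul_of_nonneg_right (Nat.le_ceil _) (hdrop t)
    _ ≤ _ := sum_mul_entRate_sub_le hT hγ _

end Weighted

theorem weighted_partition_entropy_le_liminf_general
    {k : ℕ} [NeZero k]
    (X : Fin k → Type) [∀ i, MetricSpace (X i)]
    [∀ i, MeasurableSpace (X i)] [∀ i, BorelSpace (X i)]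
    (T : ∀ i, X i → X i) (hT : ∀ i, Continuous (T i))
    (τ : ∀ i, X 0 → X i)
    (hτc : ∀ i, Continuous (τ i))
    (a : Fin k → ℝ)
    (μ : Measure (X 0)) [IsProbabilityMeasure μ] (hμ : μ.map (T 0) = μ)
    (m : Fin k → ℕ) (α : ∀ i, Fin (m i) → Set (X i)) (hα : ∀ i, IsPart (α i)) :
    (∑ i : Fin k, ((a i : ℝ) : EReal) *
        hPart μ (T 0) (partJoinFrom (fun j t => τ j ⁻¹' α j t) i))
      ≤ Filter.liminf
          (fun N : ℕ =>
            ((entH μ (bigPartJoin (T 0) a (fun j t => τ j ⁻¹' α j t) N) / N : ℝ) : EReal))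
          Filter.atTop := by
  have hT0 : MeasurePreserving (T 0) μ μ := ⟨(hT 0).measurable, hμ⟩
  have hγ : ∀ j, IsPart fun t => τ j ⁻¹' α j t := fun j => (hα j).preimage (hτc j).measurable
  have hbound : ∀ N : ℕ, 0 < N →
      ∑ i, a i * entRate μ (T 0) (fun j t => τ j ⁻¹' α j t) (tailFrom i)
        ≤ entH μ (bigPartJoin (T 0) a (fun j t => τ j ⁻¹' α j t) N) / N := fun N hN => by
    rw [le_div_iff₀' (by positivity), entH_bigPartJoin hT0.measurable hγ]
    exact mul_sum_entRate_le hT0 hγ a N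
  simp_rw [hPart_partJoinFrom hT0 hγ, ← EReal.coe_mul, ← EReal.coe_finset_sum]
  refine le_liminf_of_le (by isBoundedDefault) ?_
  filter_upwards [eventually_gt_atTop 0] with N hN
  exact EReal.coe_le_coe_iff.2 (hbound N hN)

/-- For `μ ∈ M(X₁,T₁)` and finite Borel partitions `α_i` of `X_i`,
`∑_i a_i h_μ(T₁, ⋁_{j=i}^k τ_{j-1}^{-1}α_j)
  ≤ liminf_N (1/N) H_μ(⋁_{i=1}^k (τ_{i-1}^{-1}α_i)_0^{⌈(a_1+…+a_i)N⌉-1})`. -/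
theorem weighted_partition_entropy_le_liminf
    {k : ℕ} [NeZero k]
    (X : Fin k → Type) [∀ i, MetricSpace (X i)] [∀ i, CompactSpace (X i)]
    [∀ i, MeasurableSpace (X i)] [∀ i, BorelSpace (X i)]
    (T : ∀ i, X i → X i) (hT : ∀ i, Continuous (T i))
    (τ : ∀ i, X 0 → X i) (hτ0 : τ 0 = id)
    (hτc : ∀ i, Continuous (τ i)) (hτs : ∀ i, Function.Surjective (τ i))
    (hτe : ∀ i, τ i ∘ T 0 = T i ∘ τ i)
    (hchain : ∀ i j : Fin k, i ≤ j → ∃ p : X i → X j,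
        Continuous p ∧ p ∘ T i = T j ∘ p ∧ p ∘ τ i = τ j)
    (a : Fin k → ℝ) (ha1 : 0 < a 0) (ha : ∀ i, 0 ≤ a i)
    (μ : Measure (X 0)) [IsProbabilityMeasure μ] (hμ : μ.map (T 0) = μ)
    (m : Fin k → ℕ) (α : ∀ i, Fin (m i) → Set (X i)) (hα : ∀ i, IsPart (α i)) :
    (∑ i : Fin k, ((a i : ℝ) : EReal) *
        hPart μ (T 0) (partJoinFrom (fun j t => τ j ⁻¹' α j t) i))
      ≤ Filter.liminf
          (fun N : ℕ =>
            ((entH μ (bigPartJoin (T 0) a (fun j t => τ j ⁻¹' α j t) N) / N : ℝ) : EReal))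
          Filter.atTop :=
  weighted_partition_entropy_le_liminf_general X T hT τ hτc a μ hμ m α hα

end WTP
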